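/- For every real s > 0 and all x, y with 0 ≤ y ≤ x ≤ 1, the modulus of the complex number g(√(is),x,y) satisfies |g(√(is),x,y)| = √[ (cos(√2·√s·(x−1)) − cosh(√2·√s·(x−1)))·(cos(√2·√s·y) − cosh(√2·√s·y)) / (2·s·(cosh(√2·√s) − cos(√2·√s))) ]. -/

import Mathlib

open MeasureTheory Set Filter
open scoped Real Topology

/-! Write `√(is) = (1+i)c` with `c = √s/√2` real. For real `a`,
`sinh((1+i)a) = sinh a cos a + i cosh a sin a`, so `|sinh((1+i)a)|² = (cosh 2a − cos 2a)/2`.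
For `y ≤ x`, `|g|²` is a quotient of three such moduli and `|√(is)|² = s`. -/

/-- The Green's function `g(m,x,y)` for complex parameter `m`, with
`g(0,x,y)` given by the triangular kernel. -/
noncomputable def gC (m : ℂ) (x y : ℝ) : ℂ :=
  if m = 0 then
    (((if y ≤ x then (1 - x) * y else x * (1 - y)) : ℝ) : ℂ)
  else if y ≤ x then
    -(Complex.sinh (m * ((x : ℂ) - 1)) * Complex.sinh (m * (y : ℂ))) / (m * Complex.sinh m)
  else
    -(Complex.sinh (m * (x : ℂ)) * Complex.sinh (m * ((y : ℂ) - 1))) / (m * Complex.sinh m)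

/-- `√(is) = (1+i)·√|s|/√2` for real `s`. -/
noncomputable def sqrtis (s : ℝ) : ℂ :=
  (1 + Complex.I) * (Real.sqrt |s| : ℂ) / (Real.sqrt 2 : ℂ)

lemma Complex.normSq_sinh_one_add_I_mul (a : ℝ) :
    Complex.normSq (Complex.sinh ((1 + Complex.I) * a)) =
      (Real.cosh (2 * a) - Real.cos (2 * a)) / 2 := by
  have hsplit : Complex.sinh ((1 + Complex.I) * a) =
      ((Real.sinh a * Real.cos a : ℝ) : ℂ) + ((Real.cosh a * Real.sin a : ℝ) : ℂ) * Complex.I := by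
    rw [add_mul, one_mul, mul_comm Complex.I, Complex.sinh_add, Complex.cosh_mul_I,
      Complex.sinh_mul_I]
    push_cast
    ring
  rw [hsplit, Complex.normSq_add_mul_I, Real.cosh_two_mul, Real.cos_two_mul, mul_pow, mul_pow,
    Real.cosh_sq, Real.sin_sq]
  ring

lemma sqrtis_eq_one_add_I_mul (s : ℝ) :
    sqrtis s = (1 + Complex.I) * ((Real.sqrt |s| / Real.sqrt 2 : ℝ) : ℂ) := by
  rw [sqrtis, Complex.ofReal_div, mul_div_assoc]

lemma sqrtis_ne_zero {s : ℝ} (hs : s ≠ 0) : sqrtis s ≠ 0 := by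
  rw [sqrtis_eq_one_add_I_mul]
  refine mul_ne_zero (fun h => by simpa using congrArg Complex.im h) ?_
  exact_mod_cast (div_pos (Real.sqrt_pos.mpr (abs_pos.mpr hs)) (by positivity)).ne'

lemma normSq_sqrtis (s : ℝ) : Complex.normSq (sqrtis s) = |s| := by
  have h : Complex.normSq (1 + Complex.I) = 2 := by norm_num [Complex.normSq_apply]
  rw [sqrtis_eq_one_add_I_mul, map_mul, Complex.normSq_ofReal, h, div_mul_div_comm,
    Real.mul_self_sqrt (abs_nonneg s), Real.mul_self_sqrt zero_le_two]
  ring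

lemma normSq_sinh_sqrtis_mul {s : ℝ} (hs : 0 ≤ s) (t : ℝ) :
    Complex.normSq (Complex.sinh (sqrtis s * t)) =
      (Real.cosh (Real.sqrt 2 * Real.sqrt s * t) - Real.cos (Real.sqrt 2 * Real.sqrt s * t)) / 2 := by
  have h2 : 2 * (Real.sqrt s / Real.sqrt 2 * t) = Real.sqrt 2 * Real.sqrt s * t := by
    field_simp
    rw [Real.sq_sqrt zero_le_two]
    ring
  rw [sqrtis_eq_one_add_I_mul, abs_of_nonneg hs, mul_assoc, ← Complex.ofReal_mul,
    Complex.normSq_sinh_one_add_I_mul, h2]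

lemma normSq_gC_of_le {m : ℂ} (hm : m ≠ 0) {x y : ℝ} (hyx : y ≤ x) :
    Complex.normSq (gC m x y) =
      Complex.normSq (Complex.sinh (m * (x - 1))) * Complex.normSq (Complex.sinh (m * y)) /
        (Complex.normSq m * Complex.normSq (Complex.sinh m)) := by
  simp only [gC, if_neg hm, if_pos hyx]
  rw [map_div₀, Complex.normSq_neg, map_mul, map_mul]

theorem gC_abs_formula_general (s : ℝ) (hs : 0 < s) (x y : ℝ)
    (hyx : y ≤ x) :
    ‖gC (sqrtis s) x y‖ =
      Real.sqrt
        ((Real.cos (Real.sqrt 2 * Real.sqrt s * (x - 1)) -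
            Real.cosh (Real.sqrt 2 * Real.sqrt s * (x - 1))) *
          (Real.cos (Real.sqrt 2 * Real.sqrt s * y) -
            Real.cosh (Real.sqrt 2 * Real.sqrt s * y)) /
          (2 * s * (Real.cosh (Real.sqrt 2 * Real.sqrt s) -
            Real.cos (Real.sqrt 2 * Real.sqrt s)))) := by
  have hA := normSq_sinh_sqrtis_mul hs.le (x - 1)
  have hB := normSq_sinh_sqrtis_mul hs.le y
  have hC := normSq_sinh_sqrtis_mul hs.le 1
  push_cast at hA hC
  rw [mul_one, mul_one] at hC
  rw [Complex.norm_def, normSq_gC_of_le (sqrtis_ne_zero hs.ne') hyx, normSq_sqrtis,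
    abs_of_pos hs, hA, hB, hC]
  congr 1
  field_simp
  ring

/-- For `s > 0` and `0 ≤ y ≤ x ≤ 1`, the modulus of `g(√(is),x,y)`
is given by
`|g(√(is),x,y)| = √( (cos(√2 √s (x−1)) − cosh(√2 √s (x−1))) (cos(√2 √s y) − cosh(√2 √s y))
  / (2 s (cosh(√2 √s) − cos(√2 √s))) )`. -/
theorem gC_abs_formula (s : ℝ) (hs : 0 < s) (x y : ℝ)
    (hy0 : 0 ≤ y) (hyx : y ≤ x) (hx1 : x ≤ 1) :
    ‖gC (sqrtis s) x y‖ =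
      Real.sqrt
        ((Real.cos (Real.sqrt 2 * Real.sqrt s * (x - 1)) -
            Real.cosh (Real.sqrt 2 * Real.sqrt s * (x - 1))) *
          (Real.cos (Real.sqrt 2 * Real.sqrt s * y) -
            Real.cosh (Real.sqrt 2 * Real.sqrt s * y)) /
          (2 * s * (Real.cosh (Real.sqrt 2 * Real.sqrt s) -
            Real.cos (Real.sqrt 2 * Real.sqrt s)))) :=
  gC_abs_formula_general s hs x y hyx
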